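/- Fix p ∈ P and assume that for all b, c ∈ P with p ≤ b and p ≤ c the element S_p(b_2)·c_2 − b_2·S_p(c_2) lies in J(2,P). Let q be a sibling of p (possibly q = p) and let b ≥ p. Then the element S_pT_p(q)·b_2 − T_p(q)·S_p(b_2) lies in J(2,P), where for q = p one interprets T_p(p) = T(p) and S_pT_p(p) = p_1. -/
import Mathlib


open scoped Classical

noncomputable section

namespace LP2

variable (k : Type) [Field k] (P : Type) [Fintype P] [PartialOrder P]
variable (root : P) (parent : P → P)

/-- Index set for the `u`-variables: `none` is `u_{∅,ρ}`, and `some ⟨(q,p),_⟩` is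
`u_{q,p}` for the pairs `(q,p)` such that the meet of `q` and `p` is the parent of `p`
(in a tree order this means `parent p ≤ q` and `¬ p ≤ q`). -/
abbrev UPair : Type := {qp : P × P // qp.2 ≠ root ∧ parent qp.2 ≤ qp.1 ∧ ¬ qp.2 ≤ qp.1}

/-- The variables of the ring `B(2,P)`. -/
abbrev Vars : Type := (Fin 2 × P) ⊕ (Option (UPair P root parent))

/-- The ring `B(2,P) = B ⊗_k k[x_{[2]×P}]`. -/
abbrev BR := MvPolynomial (Vars P root parent) k

/-- The variable `p₁ = x_{1,p}`. -/
def x1 (p : P) : BR k P root parent := MvPolynomial.X (Sum.inl ((0 : Fin 2), p))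

/-- The variable `p₂ = x_{2,p}`. -/
def x2 (p : P) : BR k P root parent := MvPolynomial.X (Sum.inl ((1 : Fin 2), p))

/-- The variable `u_{∅,ρ}`. -/
def u0 : BR k P root parent := MvPolynomial.X (Sum.inr none)

/-- The variable `u_{q,p}` (and `0` if `(q,p)` is not a valid pair). -/
def uv (q p : P) : BR k P root parent :=
  if h : p ≠ root ∧ parent p ≤ q ∧ ¬ p ≤ q then
    MvPolynomial.X (Sum.inr (some ⟨(q, p), h⟩)) else 0

/-- `T_c(b) = - ∑_{q ≥ c} q₂ u_{q,b}`, for `c` a sibling of `b` distinct from `b`. -/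
def Tc (c b : P) : BR k P root parent :=
  - ∑ q ∈ Finset.univ.filter (fun q => c ≤ q), x2 k P root parent q * uv k P root parent q b

/-- `T_a(b) = - a₂ u_{a,b}` where `a` is the parent of `b`. -/
def Tpar (b : P) : BR k P root parent :=
  - x2 k P root parent (parent b) * uv k P root parent (parent b) b

/-- The set of siblings of `b` (including `b` itself). -/
def sib (b : P) : Finset P := Finset.univ.filter (fun c => c ≠ root ∧ parent c = parent b)

/-- `T(ρ) = u_{∅,ρ}` and `T(b) = -T_a(b) - ∑_{c sibling of b, c ≠ b} T_c(b)`. -/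
def T (b : P) : BR k P root parent :=
  if b = root then u0 k P root parent
  else - Tpar k P root parent b - ∑ c ∈ (sib P root parent b).erase b, Tc k P root parent c b

/-- The set of children of `a`. -/
def children (a : P) : Finset P := Finset.univ.filter (fun b => b ≠ root ∧ parent b = a)

/-- The symbol `S_cT_c(b)`:  it is `b₁` if `c = b`, `-u_{c,b}` if `c` is the parent of `b`,
and `S_c(T_c(b)) = - ∑_{q ≥ c} S_c(q₂) u_{q,b}` if `c` is a sibling of `b` distinct from `b`. -/
def ST (Sx : P → P → BR k P root parent) (c b : P) : BR k P root parent :=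
  if c = b then x1 k P root parent b
  else if c = parent b then - uv k P root parent c b
  else - ∑ q ∈ Finset.univ.filter (fun q => c ≤ q), Sx c q * uv k P root parent q b

/-- The data of the recursively defined elements `D(a)^x` and `S_a(b₂)` of `B(2,P)`,
pinned down by their defining equations.  `hD` says: for any enumeration
`a = e 0, e 1, …` of `a` together with its children `e 1, …, e m`, the element
`D(a)^{e i}` is the signed maximal minor `(-1)^i |M(a)^{e i}|` of the `m × (m+1)` matrix
`M(a) = [S_{e i}T_{e i}(e (j+1))]`.  (For `a` maximal this gives `D(a)^a = 1`.)
`hSx` says: along any saturated chain `a = c 0 ⋖ c 1 ⋖ ⋯ ⋖ c n = b`,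
`S_a(b₂) = R(a,b) D(b)^b` where `R(a,b) = ∏ D(c i)^{c (i+1)}`. -/
structure DefData where
  D : P → P → BR k P root parent
  Sx : P → P → BR k P root parent
  hD : ∀ (a : P) (m : ℕ) (e : Fin (m+1) → P), Function.Injective e → e 0 = a →
      (∀ j : Fin m, e j.succ ∈ children P root parent a) →
      (∀ b ∈ children P root parent a, ∃ j : Fin m, e j.succ = b) →
      ∀ i : Fin (m+1),
        D a (e i) = (-1 : BR k P root parent) ^ (i : ℕ) *
          Matrix.det (Matrix.of fun (j l : Fin m) =>
            ST k P root parent Sx (e (i.succAbove l)) (e j.succ))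
  hSx : ∀ (n : ℕ) (c : Fin (n+1) → P),
      (∀ i : Fin n, c i.castSucc ⋖ c i.succ) →
      Sx (c 0) (c (Fin.last n)) =
        (∏ i : Fin n, D (c i.castSucc) (c i.succ)) * D (c (Fin.last n)) (c (Fin.last n))

/-- The ideal `J(2,P)`, generated by the deformations `p₁q₂ - T(p)S_p(q₂)` for `p ≤ q`. -/
def Jideal (dd : DefData k P root parent) : Ideal (BR k P root parent) :=
  Ideal.span {f | ∃ p q : P, p ≤ q ∧
    f = x1 k P root parent p * x2 k P root parent q - T k P root parent p * dd.Sx p q}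


/-- Fix `p` and assume Proposition `pro:FlatBasic` holds for `p`:
for all `b, c ≥ p`, `S_p(b₂)·c₂ − b₂·S_p(c₂) ∈ J(2,P)`.  Let `q` be a sibling of `p`
(possibly `q = p`) and `b ≥ p`.  Then `S_pT_p(q)·b₂ − T_p(q)·S_p(b₂) ∈ J(2,P)`,
where `T_p(p)` is interpreted as `T(p)` and `S_pT_p(p)` as `p₁`. -/
theorem STq_mem
    (hroot : ∀ p : P, root ≤ p)
    (htree : ∀ b : P, IsChain (· ≤ ·) {a : P | a ≤ b})
    (hpar : ∀ p : P, p ≠ root → parent p ⋖ p)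
    (dd : DefData k P root parent)
    (p q b : P)
    (hbasic : ∀ b c : P, p ≤ b → p ≤ c →
      dd.Sx p b * x2 k P root parent c - x2 k P root parent b * dd.Sx p c
        ∈ Jideal k P root parent dd)
    (hq : q = p ∨ (p ≠ root ∧ q ≠ root ∧ parent p = parent q))
    (hb : p ≤ b) :
    ST k P root parent dd.Sx p q * x2 k P root parent b -
      (if q = p then T k P root parent p else Tc k P root parent p q) * dd.Sx p b
      ∈ Jideal k P root parent dd := by
  by_cases hqp : q = p
  · subst hqp
    rw [if_pos rfl]
    rw [ST, if_pos rfl]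
    exact Ideal.subset_span ⟨q, b, hb, rfl⟩
  · rcases hq with h | ⟨hp, hqr, hpq⟩
    · exact absurd h hqp
    rw [if_neg hqp]
    have hpq' : ¬ p = q := fun h => hqp h.symm
    have hppar : ¬ p = parent q := by
      intro h
      rw [← hpq] at h
      exact (hpar p hp).ne h.symm
    rw [ST, if_neg hpq', if_neg hppar, Tc]
    have hEq :
        (-∑ r ∈ Finset.univ.filter (fun r => p ≤ r),
            dd.Sx p r * uv k P root parent r q) * x2 k P root parent b -
          (-∑ r ∈ Finset.univ.filter (fun r => p ≤ r),
            x2 k P root parent r * uv k P root parent r q) * dd.Sx p b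
        = ∑ r ∈ Finset.univ.filter (fun r => p ≤ r),
            (-(uv k P root parent r q)) *
              (dd.Sx p r * x2 k P root parent b -
                x2 k P root parent r * dd.Sx p b) := by
      simp only [neg_mul, Finset.sum_mul, neg_sub_neg, ← Finset.sum_sub_distrib]
      exact Finset.sum_congr rfl fun r _ => by ring
    rw [hEq]
    exact Ideal.sum_mem _ fun r hr =>
      Ideal.mul_mem_left _ _ (hbasic r b (Finset.mem_filter.mp hr).2 hb)

end LP2
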